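/- Suppose θ_1 ≥ θ_2 ≥ ⋯ ≥ θ_N > 0 and u_i > 0 for all i. Let (S*,σ*) be an optimal CMLAPP solution for utilities u with optimal value λ* = U(S*,σ*). For each j ∈ S* let ε_j ≥ 0 and let λ**_j denote the optimal CMLAPP value for the modified utilities in which u_j is replaced by u_j + ε_j (all other utilities unchanged). Then Σ_{j∈S*} P_j(S*,σ*) · λ**_j + P_0(S*,σ*) · λ* ≥ λ*. That is, under social influence the expected profit is non-decreasing over time when the optimal assortment and position assignment are used at every step. -/

import Mathlib

/-!
Fix `j ∈ S*` and let `x = θ_{σ*(j)} u_j`. With the other products held fixed, the profit of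
`(S*, σ*)` is the linear-fractional function `x ↦ (r_j x + A) / (x + B)` with `B > 0`, which is
monotone on `[0, ∞)`. Hence its value at `x` is at most its value at `0` (drop `j`) or at
`x' = θ_{σ*(j)} (u_j + ε_j) ≥ x` (keep `j`), and both are feasible for the modified utilities,
so `λ* ≤ λ**_j`. The claim follows because the `P_j(S*, σ*)` and `P_0(S*, σ*)` are nonnegative
and sum to one.
-/

/-- Expected profit `U(S,σ)` for utilities `u`. -/
noncomputable def expProfit {N : ℕ} (u r θ : Fin N → ℝ)
    (S : Finset (Fin N)) (σ : Fin N → Fin N) : ℝ :=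
  ∑ i ∈ S, r i * (θ (σ i) * u i / (∑ j ∈ S, θ (σ j) * u j + 1))

/-- Choice probability `P_i(S,σ)` for utilities `u`. -/
noncomputable def choiceProb {N : ℕ} (u θ : Fin N → ℝ)
    (S : Finset (Fin N)) (σ : Fin N → Fin N) (i : Fin N) : ℝ :=
  θ (σ i) * u i / (∑ j ∈ S, θ (σ j) * u j + 1)

/-- No-purchase probability `P_0(S,σ)` for utilities `u`. -/
noncomputable def noPurchase {N : ℕ} (u θ : Fin N → ℝ)
    (S : Finset (Fin N)) (σ : Fin N → Fin N) : ℝ :=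
  1 / (∑ j ∈ S, θ (σ j) * u j + 1)

open Finset

lemma mul_add_div_add_le_max {a A B x y : ℝ} (hB : 0 < B) (hx : 0 ≤ x) (hxy : x ≤ y) :
    (a * x + A) / (x + B) ≤ max (A / B) ((a * y + A) / (y + B)) := by
  rcases le_total A (a * B) with hA | hA
  · refine le_max_of_le_right ?_
    rw [div_le_div_iff₀ (by linarith) (by linarith)]
    nlinarith [mul_le_mul_of_nonneg_left hxy (sub_nonneg.mpr hA)]
  · refine le_max_of_le_left ?_
    rw [div_le_div_iff₀ (by linarith) hB]
    nlinarith [mul_le_mul_of_nonneg_left hx (sub_nonneg.mpr hA)]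

section

variable {N : ℕ} (v r θ : Fin N → ℝ) (S : Finset (Fin N)) (σ : Fin N → Fin N)

lemma sum_weight_add_one_pos (hθ : ∀ i, 0 ≤ θ i) (hv : ∀ i, 0 ≤ v i) :
    0 < ∑ i ∈ S, θ (σ i) * v i + 1 := by
  have := sum_nonneg fun i (_ : i ∈ S) => mul_nonneg (hθ (σ i)) (hv i)
  linarith

lemma expProfit_eq_div :
    expProfit v r θ S σ =
      (∑ i ∈ S, r i * (θ (σ i) * v i)) / (∑ i ∈ S, θ (σ i) * v i + 1) := by
  rw [expProfit, sum_div]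
  exact sum_congr rfl fun i _ => (mul_div_assoc _ _ _).symm

lemma expProfit_eq_div_of_mem {j : Fin N} (hj : j ∈ S) :
    expProfit v r θ S σ =
      (r j * (θ (σ j) * v j) + ∑ i ∈ S.erase j, r i * (θ (σ i) * v i)) /
        (θ (σ j) * v j + (∑ i ∈ S.erase j, θ (σ i) * v i + 1)) := by
  rw [expProfit_eq_div, ← add_sum_erase _ _ hj, ← add_sum_erase _ _ hj, add_assoc]

lemma sum_erase_update_eq (f : Fin N → ℝ → ℝ) (j : Fin N) (y : ℝ) :
    ∑ i ∈ S.erase j, f i (Function.update v j y i) = ∑ i ∈ S.erase j, f i (v i) :=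
  sum_congr rfl fun i hi => by rw [Function.update_of_ne (ne_of_mem_erase hi)]

lemma expProfit_erase_update (j : Fin N) (y : ℝ) :
    expProfit (Function.update v j y) r θ (S.erase j) σ = expProfit v r θ (S.erase j) σ := by
  rw [expProfit_eq_div, expProfit_eq_div,
    sum_erase_update_eq v S (fun i w => r i * (θ (σ i) * w)),
    sum_erase_update_eq v S (fun i w => θ (σ i) * w)]

lemma expProfit_le_max_update (hθ : ∀ i, 0 ≤ θ i) (hv : ∀ i, 0 ≤ v i)
    {j : Fin N} (hj : j ∈ S) {y : ℝ} (hy : v j ≤ y) :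
    expProfit v r θ S σ ≤
      max (expProfit (Function.update v j y) r θ (S.erase j) σ)
        (expProfit (Function.update v j y) r θ S σ) := by
  rw [expProfit_erase_update, expProfit_eq_div v r θ (S.erase j) σ,
    expProfit_eq_div_of_mem v r θ S σ hj, expProfit_eq_div_of_mem _ r θ S σ hj,
    Function.update_self,
    sum_erase_update_eq v S (fun i w => r i * (θ (σ i) * w)),
    sum_erase_update_eq v S (fun i w => θ (σ i) * w)]
  exact mul_add_div_add_le_max (sum_weight_add_one_pos v θ (S.erase j) σ hθ hv)
    (mul_nonneg (hθ _) (hv j))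
    (mul_le_mul_of_nonneg_left hy (hθ _))

lemma sum_choiceProb_add_noPurchase (hθ : ∀ i, 0 ≤ θ i) (hv : ∀ i, 0 ≤ v i) :
    ∑ i ∈ S, choiceProb v θ S σ i + noPurchase v θ S σ = 1 := by
  simp only [choiceProb, noPurchase, ← sum_div, ← add_div]
  exact div_self (sum_weight_add_one_pos v θ S σ hθ hv).ne'

lemma le_sum_choiceProb_mul_add_noPurchase_mul (hθ : ∀ i, 0 ≤ θ i) (hv : ∀ i, 0 ≤ v i)
    {lam : ℝ} {mu : Fin N → ℝ} (hmu : ∀ j ∈ S, lam ≤ mu j) :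
    lam ≤ ∑ j ∈ S, choiceProb v θ S σ j * mu j + noPurchase v θ S σ * lam := by
  have hP : ∀ j, 0 ≤ choiceProb v θ S σ j := fun j =>
    div_nonneg (mul_nonneg (hθ _) (hv j)) (sum_weight_add_one_pos v θ S σ hθ hv).le
  calc lam = (∑ j ∈ S, choiceProb v θ S σ j + noPurchase v θ S σ) * lam := by
        rw [sum_choiceProb_add_noPurchase v θ S σ hθ hv, one_mul]
    _ = ∑ j ∈ S, choiceProb v θ S σ j * lam + noPurchase v θ S σ * lam := by
        rw [add_mul, sum_mul]
    _ ≤ ∑ j ∈ S, choiceProb v θ S σ j * mu j + noPurchase v θ S σ * lam := by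
        gcongr with j hj
        exacts [hP j, hmu j hj]

end

theorem social_influence_nondecreasing_general (N c : ℕ)
    (u r θ : Fin N → ℝ)
    (hu : ∀ i, 0 < u i) (hθpos : ∀ i, 0 < θ i)
    (ε : Fin N → ℝ) (hε : ∀ j, 0 ≤ ε j)
    (Sstar : Finset (Fin N)) (σstar : Fin N → Fin N)
    (hcard : Sstar.card ≤ c) (hinj : Set.InjOn σstar ↑Sstar)
    (lamStar : ℝ)
    (hlamStar : lamStar = expProfit u r θ Sstar σstar)
    (lamStarStar : Fin N → ℝ)
    (hlamStarStar : ∀ j ∈ Sstar,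
      IsGreatest {z : ℝ | ∃ (S : Finset (Fin N)) (σ : Fin N → Fin N),
        S.card ≤ c ∧ Set.InjOn σ ↑S ∧
        z = expProfit (Function.update u j (u j + ε j)) r θ S σ}
        (lamStarStar j)) :
    lamStar ≤ (∑ j ∈ Sstar, choiceProb u θ Sstar σstar j * lamStarStar j)
        + noPurchase u θ Sstar σstar * lamStar := by
  have hθ : ∀ i, 0 ≤ θ i := fun i => (hθpos i).le
  have hu' : ∀ i, 0 ≤ u i := fun i => (hu i).le
  refine le_sum_choiceProb_mul_add_noPurchase_mul u θ Sstar σstar hθ hu' fun j hj => ?_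
  have hub := (hlamStarStar j hj).2
  have hdrop : expProfit (Function.update u j (u j + ε j)) r θ (Sstar.erase j) σstar
      ≤ lamStarStar j :=
    hub ⟨_, σstar, (card_erase_le).trans hcard, hinj.mono (by simp), rfl⟩
  have hkeep : expProfit (Function.update u j (u j + ε j)) r θ Sstar σstar ≤ lamStarStar j :=
    hub ⟨_, σstar, hcard, hinj, rfl⟩
  rw [hlamStar]
  exact (expProfit_le_max_update u r θ Sstar σstar hθ hu' hj
    (le_add_of_nonneg_right (hε j))).trans (max_le hdrop hkeep)

/-- let `(S*,σ*)` be an optimal CMLAPP solution with value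
`λ* = U(S*,σ*)`, and for each `j ∈ S*` let `λ**_j` be the optimal CMLAPP value
when `u_j` is increased to `u_j + ε_j` (all other utilities unchanged).  Then
`Σ_{j∈S*} P_j(S*,σ*) λ**_j + P_0(S*,σ*) λ* ≥ λ*`: under social influence the
expected profit is non-decreasing over time when the optimal assortment and
position assignment are used at every step. -/
theorem social_influence_nondecreasing (N c : ℕ) (hc : c ≤ N)
    (u r θ : Fin N → ℝ)
    (hu : ∀ i, 0 < u i) (hθpos : ∀ i, 0 < θ i)
    (hθ : ∀ i j : Fin N, i ≤ j → θ j ≤ θ i)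
    (ε : Fin N → ℝ) (hε : ∀ j, 0 ≤ ε j)
    (Sstar : Finset (Fin N)) (σstar : Fin N → Fin N)
    (hcard : Sstar.card ≤ c) (hinj : Set.InjOn σstar ↑Sstar)
    (lamStar : ℝ)
    (hlamStar : lamStar = expProfit u r θ Sstar σstar)
    (hopt : IsGreatest {z : ℝ | ∃ (S : Finset (Fin N)) (σ : Fin N → Fin N),
        S.card ≤ c ∧ Set.InjOn σ ↑S ∧ z = expProfit u r θ S σ} lamStar)
    (lamStarStar : Fin N → ℝ)
    (hlamStarStar : ∀ j ∈ Sstar,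
      IsGreatest {z : ℝ | ∃ (S : Finset (Fin N)) (σ : Fin N → Fin N),
        S.card ≤ c ∧ Set.InjOn σ ↑S ∧
        z = expProfit (Function.update u j (u j + ε j)) r θ S σ}
        (lamStarStar j)) :
    lamStar ≤ (∑ j ∈ Sstar, choiceProb u θ Sstar σstar j * lamStarStar j)
        + noPurchase u θ Sstar σstar * lamStar :=
  social_influence_nondecreasing_general N c u r θ hu hθpos ε hε Sstar σstar hcard hinj lamStar
    hlamStar lamStarStar hlamStarStar
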